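/- If 0 < ν < 1 - μ with μ > 0 and z ≥ 2 is a real number, then there exists a constant C depending only on μ and ν such that ∑_{k=1}^{∞} log(k+z)/((k+z)^{1-μ} k^{1-ν}) ≤ C (log z)/z^{1-μ-ν}. -/

import Mathlib

/-!
Write `log (k + z) ≤ log z + ε⁻¹ ((k + z) / z) ^ ε` with `0 < ε < 1 - μ - ν`; this reduces the
claim to the log-free bound `∑ₖ (k + z) ^ (a - 1) k ^ (ν - 1) ≤ C z ^ (a + ν - 1)` for `a = μ` and
`a = μ + ε`. For that bound split at `N = ⌈z⌉`: for `k ≤ N` use `(k + z) ^ (a - 1) ≤ z ^ (a - 1)`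
and `∑_{k ≤ N} k ^ (ν - 1) ≤ N ^ ν / ν`; for `k > N` use `(k + z) ^ (a - 1) ≤ k ^ (a - 1)` and
`∑_{k > N} k ^ (a + ν - 2) ≤ N ^ (a + ν - 1) / (1 - a - ν)`. Both power sums telescope against
`k ^ t / t`, by Bernoulli's inequality.
-/

open Real Finset

theorem one_add_mul_self_le_rpow_one_add_of_nonpos {s : ℝ} (hs : -1 < s) {p : ℝ} (hp : p ≤ 0) :
    1 + p * s ≤ (1 + s) ^ p := by
  have hs1 : 0 < 1 + s := by linarith
  rcases le_or_gt (1 + p * s) 0 with h | h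
  · exact h.trans (rpow_pos_of_pos hs1 p).le
  rw [← log_le_log_iff h (rpow_pos_of_pos hs1 p), log_rpow hs1]
  calc log (1 + p * s) ≤ p * s := by linarith [log_le_sub_one_of_pos h]
    _ ≤ p * log (1 + s) :=
      mul_le_mul_of_nonpos_left (by linarith [log_le_sub_one_of_pos hs1]) hp

theorem mul_rpow_sub_one_le_rpow_sub_rpow {t x : ℝ} (ht0 : 0 ≤ t) (ht1 : t ≤ 1) (hx : 1 ≤ x) :
    t * x ^ (t - 1) ≤ x ^ t - (x - 1) ^ t := by
  have hx0 : 0 < x := by linarith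
  have hu : -1 ≤ -x⁻¹ := neg_le_neg (inv_le_one_of_one_le₀ hx)
  have hsplit : x - 1 = x * (1 + -x⁻¹) := by field_simp; ring
  have hbern := rpow_one_add_le_one_add_mul_self hu ht0 ht1
  rw [hsplit, mul_rpow hx0.le (by linarith), rpow_sub_one hx0.ne']
  have := mul_le_mul_of_nonneg_left hbern (rpow_nonneg hx0.le t)
  linarith [show x ^ t * (1 + t * -x⁻¹) = x ^ t - t * (x ^ t / x) by ring]

theorem neg_mul_rpow_sub_one_le_rpow_sub_rpow {t x : ℝ} (ht : t ≤ 0) (hx : 1 < x) :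
    -t * x ^ (t - 1) ≤ (x - 1) ^ t - x ^ t := by
  have hx0 : 0 < x := by linarith
  have hu : -1 < -x⁻¹ := neg_lt_neg (inv_lt_one_of_one_lt₀ hx)
  have hsplit : x - 1 = x * (1 + -x⁻¹) := by field_simp; ring
  have hbern := one_add_mul_self_le_rpow_one_add_of_nonpos hu ht
  rw [hsplit, mul_rpow hx0.le (by linarith), rpow_sub_one hx0.ne']
  have := mul_le_mul_of_nonneg_left hbern (rpow_nonneg hx0.le t)
  linarith [show x ^ t * (1 + t * -x⁻¹) = x ^ t - t * (x ^ t / x) by ring]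

theorem sum_Ioc_le_sub_of_le_sub {g F : ℕ → ℝ} {m n : ℕ} (hmn : m ≤ n)
    (h : ∀ k ∈ Ioc m n, g k ≤ F k - F (k - 1)) : ∑ k ∈ Ioc m n, g k ≤ F n - F m := by
  induction n, hmn using Nat.le_induction with
  | base => simp
  | succ n hmn ih =>
    rw [sum_Ioc_succ_top hmn]
    have hn := h (n + 1) (mem_Ioc.2 ⟨by omega, le_rfl⟩)
    have := ih fun k hk => h k (Ioc_subset_Ioc_right n.le_succ hk)
    simp only [Nat.add_sub_cancel] at hn
    linarith

theorem sum_Ioc_zero_rpow_sub_one_le {t : ℝ} (ht0 : 0 < t) (ht1 : t ≤ 1) (n : ℕ) :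
    ∑ k ∈ Ioc 0 n, (k : ℝ) ^ (t - 1) ≤ (n : ℝ) ^ t / t := by
  have := sum_Ioc_le_sub_of_le_sub (g := fun k : ℕ => (k : ℝ) ^ (t - 1))
    (F := fun k : ℕ => (k : ℝ) ^ t / t) n.zero_le fun k hk => by
      have hk : 1 ≤ k := (mem_Ioc.1 hk).1
      rw [← sub_div, le_div_iff₀ ht0, Nat.cast_sub hk, Nat.cast_one, mul_comm]
      exact mul_rpow_sub_one_le_rpow_sub_rpow ht0.le ht1 (by exact_mod_cast hk)
  simpa [zero_rpow ht0.ne'] using this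

theorem sum_Ioc_rpow_sub_one_le {t : ℝ} (ht : t < 0) {m : ℕ} (hm : 1 ≤ m) (n : ℕ) :
    ∑ k ∈ Ioc m n, (k : ℝ) ^ (t - 1) ≤ (m : ℝ) ^ t / (-t) := by
  have hmt : 0 ≤ (m : ℝ) ^ t / (-t) := div_nonneg (rpow_nonneg m.cast_nonneg t) (by linarith)
  rcases lt_or_ge n m with hnm | hmn
  · simpa [Ioc_eq_empty_of_le hnm.le] using hmt
  have := sum_Ioc_le_sub_of_le_sub (g := fun k : ℕ => (k : ℝ) ^ (t - 1))
    (F := fun k : ℕ => -((k : ℝ) ^ t / (-t))) hmn fun k hk => by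
      have hk : m < k := (mem_Ioc.1 hk).1
      rw [neg_sub_neg, ← sub_div, le_div_iff₀ (by linarith), Nat.cast_sub (by omega),
        Nat.cast_one, mul_comm]
      exact neg_mul_rpow_sub_one_le_rpow_sub_rpow ht.le (by exact_mod_cast (by omega : 1 < k))
  have hnt : 0 ≤ (n : ℝ) ^ t / (-t) := div_nonneg (rpow_nonneg n.cast_nonneg t) (by linarith)
  linarith

theorem exists_sum_Ioc_rpow_add_mul_rpow_le {mu nu : ℝ} (hnu : 0 < nu) (hnu1 : nu ≤ 1)
    (hs : mu + nu < 1) :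
    ∃ C, 0 < C ∧ ∀ z : ℝ, 1 ≤ z → ∀ n : ℕ,
      ∑ k ∈ Ioc 0 n, ((k : ℝ) + z) ^ (mu - 1) * (k : ℝ) ^ (nu - 1) ≤ C * z ^ (mu + nu - 1) := by
  have hs' : 0 < 1 - mu - nu := by linarith
  refine ⟨2 ^ nu / nu + 1 / (1 - mu - nu), by positivity, fun z hz n => ?_⟩
  have hz0 : 0 < z := by linarith
  set N := ⌈z⌉₊
  have hzN : z ≤ N := Nat.le_ceil z
  have hN1 : 1 ≤ N := Nat.one_le_cast.1 (hz.trans hzN)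
  have hN2z : (N : ℝ) ≤ 2 * z := by linarith [Nat.ceil_lt_add_one hz0.le]
  have hhead : ∑ k ∈ Ioc 0 N, ((k : ℝ) + z) ^ (mu - 1) * (k : ℝ) ^ (nu - 1)
      ≤ 2 ^ nu / nu * z ^ (mu + nu - 1) :=
    calc ∑ k ∈ Ioc 0 N, ((k : ℝ) + z) ^ (mu - 1) * (k : ℝ) ^ (nu - 1)
        ≤ ∑ k ∈ Ioc 0 N, z ^ (mu - 1) * (k : ℝ) ^ (nu - 1) := by
          refine sum_le_sum fun k _ => mul_le_mul_of_nonneg_right ?_ (by positivity)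
          exact rpow_le_rpow_of_nonpos hz0 (le_add_of_nonneg_left k.cast_nonneg)
            (by linarith : mu - 1 ≤ 0)
      _ ≤ z ^ (mu - 1) * ((2 * z) ^ nu / nu) := by
          rw [← mul_sum]
          gcongr
          exact (sum_Ioc_zero_rpow_sub_one_le hnu hnu1 N).trans (by gcongr)
      _ = 2 ^ nu / nu * z ^ (mu + nu - 1) := by
          rw [mul_rpow zero_le_two hz0.le, show mu + nu - 1 = mu - 1 + nu by ring, rpow_add hz0]
          ring
  have htail (M : ℕ) : ∑ k ∈ Ioc N M, ((k : ℝ) + z) ^ (mu - 1) * (k : ℝ) ^ (nu - 1)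
      ≤ 1 / (1 - mu - nu) * z ^ (mu + nu - 1) :=
    calc ∑ k ∈ Ioc N M, ((k : ℝ) + z) ^ (mu - 1) * (k : ℝ) ^ (nu - 1)
        ≤ ∑ k ∈ Ioc N M, (k : ℝ) ^ (mu + nu - 1 - 1) := by
          refine sum_le_sum fun k hk => ?_
          have hk : (0 : ℝ) < k := Nat.cast_pos.2 (by have := (mem_Ioc.1 hk).1; omega)
          rw [show mu + nu - 1 - 1 = (mu - 1) + (nu - 1) by ring, rpow_add hk]
          refine mul_le_mul_of_nonneg_right ?_ (rpow_nonneg hk.le _)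
          exact rpow_le_rpow_of_nonpos hk (le_add_of_nonneg_right hz0.le)
            (by linarith : mu - 1 ≤ 0)
      _ ≤ (N : ℝ) ^ (mu + nu - 1) / (-(mu + nu - 1)) :=
          sum_Ioc_rpow_sub_one_le (by linarith) hN1 M
      _ ≤ z ^ (mu + nu - 1) / (1 - mu - nu) := by
          rw [show -(mu + nu - 1) = 1 - mu - nu by ring]
          exact div_le_div_of_nonneg_right
            (rpow_le_rpow_of_nonpos hz0 hzN (by linarith)) hs'.le
      _ = 1 / (1 - mu - nu) * z ^ (mu + nu - 1) := by ring
  have hnonneg (k : ℕ) : 0 ≤ ((k : ℝ) + z) ^ (mu - 1) * (k : ℝ) ^ (nu - 1) := by positivity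
  calc ∑ k ∈ Ioc 0 n, ((k : ℝ) + z) ^ (mu - 1) * (k : ℝ) ^ (nu - 1)
      ≤ ∑ k ∈ Ioc 0 (max N n), ((k : ℝ) + z) ^ (mu - 1) * (k : ℝ) ^ (nu - 1) :=
        sum_le_sum_of_subset_of_nonneg (Ioc_subset_Ioc_right (le_max_right N n))
          fun k _ _ => hnonneg k
    _ = ∑ k ∈ Ioc 0 N, ((k : ℝ) + z) ^ (mu - 1) * (k : ℝ) ^ (nu - 1)
        + ∑ k ∈ Ioc N (max N n), ((k : ℝ) + z) ^ (mu - 1) * (k : ℝ) ^ (nu - 1) :=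
        (sum_Ioc_consecutive _ (Nat.zero_le N) (le_max_left N n)).symm
    _ ≤ _ := by linarith [htail (max N n)]

theorem log_le_log_add_rpow_div {y z ε : ℝ} (hy : 0 < y) (hz : 0 < z) (hε : 0 < ε) :
    log y ≤ log z + (y / z) ^ ε / ε := by
  rw [← sub_le_iff_le_add', ← log_div hy.ne' hz.ne']
  exact log_le_rpow_div (by positivity) hε

theorem exists_sum_Ioc_log_mul_rpow_add_mul_rpow_le {mu nu : ℝ} (hnu : 0 < nu) (hnu1 : nu ≤ 1)
    (hs : mu + nu < 1) :
    ∃ C, 0 < C ∧ ∀ z : ℝ, 2 ≤ z → ∀ n : ℕ,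
      ∑ k ∈ Ioc 0 n, log ((k : ℝ) + z) * ((k : ℝ) + z) ^ (mu - 1) * (k : ℝ) ^ (nu - 1)
        ≤ C * log z * z ^ (mu + nu - 1) := by
  obtain ⟨ε, hε, hsε⟩ : ∃ ε, 0 < ε ∧ mu + ε + nu < 1 :=
    ⟨(1 - mu - nu) / 2, by linarith, by linarith⟩
  obtain ⟨C₁, hC₁, h₁⟩ := exists_sum_Ioc_rpow_add_mul_rpow_le hnu hnu1 hs
  obtain ⟨C₂, hC₂, h₂⟩ :=
    exists_sum_Ioc_rpow_add_mul_rpow_le (mu := mu + ε) hnu hnu1 hsε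
  refine ⟨C₁ + 2 * C₂ / ε, by positivity, fun z hz n => ?_⟩
  have hz0 : 0 < z := by linarith
  have hlog : 1 / 2 ≤ log z := by linarith [log_two_gt_d9, log_le_log two_pos hz]
  have hterm (k : ℕ) : log ((k : ℝ) + z) * ((k : ℝ) + z) ^ (mu - 1) * (k : ℝ) ^ (nu - 1)
      ≤ log z * (((k : ℝ) + z) ^ (mu - 1) * (k : ℝ) ^ (nu - 1))
        + z ^ (-ε) / ε * (((k : ℝ) + z) ^ (mu + ε - 1) * (k : ℝ) ^ (nu - 1)) := by
    have hy : 0 < (k : ℝ) + z := by positivity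
    calc log ((k : ℝ) + z) * ((k : ℝ) + z) ^ (mu - 1) * (k : ℝ) ^ (nu - 1)
        ≤ (log z + (((k : ℝ) + z) / z) ^ ε / ε) * ((k : ℝ) + z) ^ (mu - 1)
            * (k : ℝ) ^ (nu - 1) := by
          gcongr
          exact log_le_log_add_rpow_div hy hz0 hε
      _ = _ := by
          rw [div_rpow hy.le hz0.le, show mu + ε - 1 = ε + (mu - 1) by ring, rpow_add hy,
            rpow_neg hz0.le]
          ring
  calc ∑ k ∈ Ioc 0 n, log ((k : ℝ) + z) * ((k : ℝ) + z) ^ (mu - 1) * (k : ℝ) ^ (nu - 1)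
      ≤ log z * ∑ k ∈ Ioc 0 n, ((k : ℝ) + z) ^ (mu - 1) * (k : ℝ) ^ (nu - 1)
        + z ^ (-ε) / ε * ∑ k ∈ Ioc 0 n, ((k : ℝ) + z) ^ (mu + ε - 1) * (k : ℝ) ^ (nu - 1) := by
        rw [mul_sum, mul_sum, ← sum_add_distrib]
        exact sum_le_sum fun k _ => hterm k
    _ ≤ log z * (C₁ * z ^ (mu + nu - 1)) + z ^ (-ε) / ε * (C₂ * z ^ (mu + ε + nu - 1)) := by
        gcongr
        · exact h₁ z (by linarith) n
        · exact h₂ z (by linarith) n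
    _ = (C₁ * log z + C₂ / ε) * z ^ (mu + nu - 1) := by
        rw [show mu + ε + nu - 1 = ε + (mu + nu - 1) by ring, rpow_add hz0, rpow_neg hz0.le]
        field_simp
    _ ≤ (C₁ * log z + 2 * C₂ / ε * log z) * z ^ (mu + nu - 1) := by
        gcongr
        calc C₂ / ε = 2 * C₂ / ε * (1 / 2) := by ring
          _ ≤ 2 * C₂ / ε * log z := by gcongr
    _ = (C₁ + 2 * C₂ / ε) * log z * z ^ (mu + nu - 1) := by ring

theorem log_weighted_sum_bound_translate (mu nu : ℝ) (hmu : 0 < mu) (hnu : 0 < nu)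
    (hsum : nu < 1 - mu) :
    ∃ C : ℝ, 0 < C ∧ ∀ z : ℝ, 2 ≤ z →
      (∑' k : ℕ, if 1 ≤ k then
          Real.log ((k : ℝ) + z) * ((k : ℝ) + z) ^ (mu - 1) * (k : ℝ) ^ (nu - 1) else 0)
        ≤ C * Real.log z / z ^ (1 - mu - nu) := by
  obtain ⟨C, hC, hbound⟩ :=
    exists_sum_Ioc_log_mul_rpow_add_mul_rpow_le (mu := mu) hnu (by linarith) (by linarith)
  refine ⟨C, hC, fun z hz => ?_⟩
  have hterm_nonneg (k : ℕ) :
      0 ≤ log ((k : ℝ) + z) * ((k : ℝ) + z) ^ (mu - 1) * (k : ℝ) ^ (nu - 1) := by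
    have : 0 ≤ log ((k : ℝ) + z) := log_nonneg (by linarith [k.cast_nonneg (α := ℝ)])
    positivity
  rw [div_eq_mul_inv, ← rpow_neg (by linarith), show -(1 - mu - nu) = mu + nu - 1 by ring]
  refine Real.tsum_le_of_sum_range_le (fun k => ?_) fun n => ?_
  · split_ifs
    exacts [hterm_nonneg k, le_rfl]
  rw [← sum_filter]
  refine le_trans (sum_le_sum_of_subset_of_nonneg ?_ fun k _ _ => hterm_nonneg k) (hbound z hz n)
  intro k hk
  simp only [mem_filter, mem_range] at hk
  exact mem_Ioc.2 ⟨hk.2, hk.1.le⟩
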